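/- For a pure product initial state ρ ⊗ P_φ and a Lüders measurement with projections Q_n = U*(1 ⊗ P_n)U on the composite system, the entropy of the post-measurement state ρ' = Σ_n Q_n (ρ ⊗ P_φ) Q_n satisfies S(ρ) ≤ S(ρ'). -/

import Mathlib

open Matrix Kronecker
open scoped ComplexOrder

/-- Matrix logarithm via the spectral decomposition, with `log 0 = 0` on the kernel. -/
noncomputable def mlog {n : Type*} [Fintype n] [DecidableEq n] (A : Matrix n n ℂ) :
    Matrix n n ℂ := by
  classical
  exact
    if hA : A.IsHermitian then
      (hA.eigenvectorUnitary : Matrix n n ℂ) *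
        Matrix.diagonal (fun i => (Real.log (hA.eigenvalues i) : ℂ)) *
        (star (hA.eigenvectorUnitary : Matrix n n ℂ))
    else 0

/-- Von Neumann entropy `S(τ) = -Tr(τ log τ)`. -/
noncomputable def vnEntropy {n : Type*} [Fintype n] [DecidableEq n]
    (A : Matrix n n ℂ) : ℝ := -(A * mlog A).trace.re

/-!
Write `τ = ρ ⊗ P_φ`. Entropy is additive on Kronecker products (because
`negMulLog (x * y) = y * negMulLog x + x * negMulLog y`) and vanishes on projections, so
`S(τ) = S(ρ)`. The `Q_n` form again a complete family of orthogonal Hermitian projections, so the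
pinching `τ' = Σ_n Q_n τ Q_n` commutes with every `Q_n`, hence so does `log τ'`, and
`Tr (τ' log τ') = Tr (τ log τ')`. Since `ker τ' ≤ ker τ`, Klein's inequality
`Tr (τ log τ') ≤ Tr (τ log τ) - Tr τ + Tr τ'` holds even with the convention `log 0 = 0`,
and `Tr τ' = Tr τ` turns it into `S(τ) ≤ S(τ')`.
-/

theorem Real.mul_log_le_mul_log_sub_add {p q : ℝ} (hp : 0 ≤ p) (hq : 0 ≤ q)
    (hpq : q = 0 → p = 0) : p * Real.log q ≤ p * Real.log p - p + q := by
  rcases hp.eq_or_lt with rfl | hp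
  · simpa using hq
  rcases hq.eq_or_lt with rfl | hq
  · exact absurd (hpq rfl) hp.ne'
  have hlog : Real.log q - Real.log p ≤ q / p - 1 := by
    rw [← Real.log_div hq.ne' hp.ne']
    exact Real.log_le_sub_one_of_pos (div_pos hq hp)
  have := mul_le_mul_of_nonneg_left hlog hp.le
  rw [mul_sub, mul_sub, mul_div_cancel₀ _ hp.ne', mul_one] at this
  linarith

namespace Matrix

section Spectral

variable {n : Type*} [Fintype n] [DecidableEq n]

theorem IsHermitian.eq_mul_diagonal_mul {A : Matrix n n ℂ} (hA : A.IsHermitian) :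
    A = (hA.eigenvectorUnitary : Matrix n n ℂ) * diagonal (fun i ↦ (hA.eigenvalues i : ℂ)) *
      (hA.eigenvectorUnitary : Matrix n n ℂ)ᴴ := by
  conv_lhs => rw [hA.spectral_theorem]
  simp [Function.comp_def, star_eq_conjTranspose]

theorem IsHermitian.mul_eigenvectorUnitary {A : Matrix n n ℂ} (hA : A.IsHermitian) :
    A * hA.eigenvectorUnitary =
      (hA.eigenvectorUnitary : Matrix n n ℂ) * diagonal (fun i ↦ (hA.eigenvalues i : ℂ)) := by
  set E : Matrix n n ℂ := (hA.eigenvectorUnitary : Matrix n n ℂ)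
  calc A * E = E * diagonal (fun i ↦ (hA.eigenvalues i : ℂ)) * Eᴴ * E := by
        rw [← hA.eq_mul_diagonal_mul]
    _ = E * diagonal (fun i ↦ (hA.eigenvalues i : ℂ)) := by
        rw [mul_assoc, ← star_eq_conjTranspose, Unitary.coe_star_mul_self, mul_one]

theorem IsHermitian.re_trace_eq_sum_eigenvalues {A : Matrix n n ℂ} (hA : A.IsHermitian) :
    A.trace.re = ∑ i, hA.eigenvalues i := by
  simp [hA.trace_eq_sum_eigenvalues]

theorem mlog_eq_cfc (A : Matrix n n ℂ) : mlog A = cfc Real.log A := by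
  by_cases hA : A.IsHermitian
  · rw [hA.cfc_eq, IsHermitian.cfc, Unitary.conjStarAlgAut_apply, mlog, dif_pos hA]
    rfl
  · rw [mlog, dif_neg hA]
    exact (cfc_apply_of_not_predicate A hA).symm

theorem vnEntropy_eq_re_trace_cfc (A : Matrix n n ℂ) :
    vnEntropy A = (cfc Real.negMulLog A).trace.re := by
  by_cases hA : IsSelfAdjoint A
  · have hcont (f : ℝ → ℝ) : ContinuousOn f (spectrum ℝ A) :=
      A.finite_real_spectrum.continuousOn f
    have : cfc Real.negMulLog A = -(A * cfc Real.log A) := by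
      have hfun : Real.negMulLog = fun x ↦ -(x * Real.log x) := by
        ext x; rw [Real.negMulLog, neg_mul]
      rw [hfun, cfc_neg, cfc_mul (fun x ↦ x) Real.log A (hcont _) (hcont _), cfc_id' ℝ A]
    rw [vnEntropy, this, mlog_eq_cfc, trace_neg, Complex.neg_re]
  · rw [vnEntropy, mlog_eq_cfc, cfc_apply_of_not_predicate A hA,
      cfc_apply_of_not_predicate A hA]
    simp

theorem mul_diagonal_comp_eq_diagonal_comp_mul {B : Matrix n n ℂ} {d e : n → ℝ}
    (f : ℝ → ℝ) (h : B * diagonal (fun i ↦ (d i : ℂ)) = diagonal (fun i ↦ (e i : ℂ)) * B) :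
    B * diagonal (fun i ↦ (f (d i) : ℂ)) = diagonal (fun i ↦ (f (e i) : ℂ)) * B := by
  ext i j
  have hij := congrFun (congrFun h i) j
  simp only [mul_diagonal, diagonal_mul] at hij ⊢
  by_cases hB : B i j = 0
  · simp [hB]
  · have : d j = e i := by exact_mod_cast mul_left_cancel₀ hB (hij.trans (mul_comm _ _))
    rw [this, mul_comm]

theorem cfc_eq_of_eq_mul_diagonal_mul {A V : Matrix n n ℂ} (hV : V ∈ unitaryGroup n ℂ)
    {d : n → ℝ} (hA : A = V * diagonal (fun i ↦ (d i : ℂ)) * Vᴴ) (f : ℝ → ℝ) :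
    cfc f A = V * diagonal (fun i ↦ (f (d i) : ℂ)) * Vᴴ := by
  have hAh : A.IsHermitian :=
    hA ▸ isHermitian_mul_mul_conjTranspose V (isHermitian_diagonal_of_self_adjoint _
      (by ext i; simp))
  set E : Matrix n n ℂ := (hAh.eigenvectorUnitary : Matrix n n ℂ)
  have hE : E ∈ unitaryGroup n ℂ := hAh.eigenvectorUnitary.2
  have hEA : star E * A = diagonal (fun i ↦ (hAh.eigenvalues i : ℂ)) * star E := by
    conv_lhs => rw [hAh.spectral_theorem]
    simp [E, ← mul_assoc, mem_unitaryGroup_iff'.mp hE, Function.comp_def]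
  have hAV : A * V = V * diagonal (fun i ↦ (d i : ℂ)) := by
    rw [hA, mul_assoc, ← star_eq_conjTranspose, mem_unitaryGroup_iff'.mp hV, mul_one]
  have hcomm : (star E * V) * diagonal (fun i ↦ (d i : ℂ))
      = diagonal (fun i ↦ (hAh.eigenvalues i : ℂ)) * (star E * V) := by
    rw [mul_assoc, ← hAV, ← mul_assoc, hEA, mul_assoc]
  have hfcomm := mul_diagonal_comp_eq_diagonal_comp_mul f hcomm
  rw [hAh.cfc_eq, IsHermitian.cfc, Unitary.conjStarAlgAut_apply]
  calc (E * diagonal (RCLike.ofReal ∘ f ∘ hAh.eigenvalues) * star E : Matrix n n ℂ)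
      = E * (diagonal (fun i ↦ (f (hAh.eigenvalues i) : ℂ)) * (star E * V)) * Vᴴ := by
        simp only [← star_eq_conjTranspose, mul_assoc, mem_unitaryGroup_iff.mp hV, mul_one]
        rfl
    _ = V * diagonal (fun i ↦ (f (d i) : ℂ)) * Vᴴ := by
        rw [← hfcomm, ← mul_assoc, ← mul_assoc, mem_unitaryGroup_iff.mp hE, one_mul]

theorem vnEntropy_eq_of_eq_mul_diagonal_mul {A V : Matrix n n ℂ} (hV : V ∈ unitaryGroup n ℂ)
    {d : n → ℝ} (hA : A = V * diagonal (fun i ↦ (d i : ℂ)) * Vᴴ) :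
    vnEntropy A = ∑ i, Real.negMulLog (d i) := by
  rw [vnEntropy_eq_re_trace_cfc, cfc_eq_of_eq_mul_diagonal_mul hV hA, trace_mul_cycle,
    ← star_eq_conjTranspose, mem_unitaryGroup_iff'.mp hV, one_mul, trace_diagonal, Complex.re_sum]
  simp only [Complex.ofReal_re]

theorem vnEntropy_kronecker {m : Type*} [Fintype m] [DecidableEq m] {A : Matrix n n ℂ}
    {B : Matrix m m ℂ} (hA : A.IsHermitian) (hB : B.IsHermitian) :
    vnEntropy (A ⊗ₖ B) = B.trace.re * vnEntropy A + A.trace.re * vnEntropy B := by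
  set E : Matrix n n ℂ := (hA.eigenvectorUnitary : Matrix n n ℂ)
  set F : Matrix m m ℂ := (hB.eigenvectorUnitary : Matrix m m ℂ)
  have hEF : E ⊗ₖ F ∈ unitaryGroup (n × m) ℂ :=
    kronecker_mem_unitary hA.eigenvectorUnitary.2 hB.eigenvectorUnitary.2
  have hAB : A ⊗ₖ B = (E ⊗ₖ F) *
      diagonal (fun ij : n × m ↦ ((hA.eigenvalues ij.1 * hB.eigenvalues ij.2 : ℝ) : ℂ)) *
      (E ⊗ₖ F)ᴴ := by
    conv_lhs => rw [hA.eq_mul_diagonal_mul, hB.eq_mul_diagonal_mul]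
    rw [mul_kronecker_mul, mul_kronecker_mul, diagonal_kronecker_diagonal, conjTranspose_kronecker]
    simp only [Complex.ofReal_mul]
    rfl
  rw [vnEntropy_eq_of_eq_mul_diagonal_mul hEF hAB, vnEntropy_eq_of_eq_mul_diagonal_mul
    hA.eigenvectorUnitary.2 hA.eq_mul_diagonal_mul, vnEntropy_eq_of_eq_mul_diagonal_mul
    hB.eigenvectorUnitary.2 hB.eq_mul_diagonal_mul, hA.re_trace_eq_sum_eigenvalues,
    hB.re_trace_eq_sum_eigenvalues, Fintype.sum_prod_type]
  simp only [Real.negMulLog_mul, Finset.sum_add_distrib, ← Finset.sum_mul, ← Finset.mul_sum]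

theorem vnEntropy_eq_zero_of_isIdempotentElem {P : Matrix n n ℂ} (hP : IsIdempotentElem P) :
    vnEntropy P = 0 := by
  have hvanish : (spectrum ℝ P).EqOn Real.negMulLog 0 := by
    intro x hx
    rcases hP.spectrum_subset ℝ hx with rfl | rfl <;> simp
  rw [vnEntropy_eq_re_trace_cfc, cfc_congr hvanish, cfc_zero, trace_zero, Complex.zero_re]

theorem map_normSq_mem_doublyStochastic {C : Matrix n n ℂ} (hC : C ∈ unitaryGroup n ℂ) :
    C.map Complex.normSq ∈ doublyStochastic ℝ n := by
  have hrow (i : n) : (C * star C) i i = ((∑ j, Complex.normSq (C i j) : ℝ) : ℂ) := by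
    simp [mul_apply, Complex.mul_conj]
  have hcol (j : n) : (star C * C) j j = ((∑ i, Complex.normSq (C i j) : ℝ) : ℂ) := by
    simp [mul_apply, Complex.normSq_eq_conj_mul_self]
  refine mem_doublyStochastic_iff_sum.mpr ⟨fun i j ↦ Complex.normSq_nonneg _, fun i ↦ ?_,
    fun j ↦ ?_⟩
  · have := hrow i
    rw [mem_unitaryGroup_iff.mp hC, one_apply_eq] at this
    exact_mod_cast this.symm
  · have := hcol j
    rw [mem_unitaryGroup_iff'.mp hC, one_apply_eq] at this
    exact_mod_cast this.symm

theorem sum_sum_mul_add_of_mem_doublyStochastic {M : Matrix n n ℝ}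
    (hM : M ∈ doublyStochastic ℝ n) (f g : n → ℝ) :
    ∑ j, ∑ i, M j i * (f i + g j) = ∑ i, f i + ∑ j, g j := by
  simp only [mul_add, Finset.sum_add_distrib, ← Finset.sum_mul,
    sum_row_of_mem_doublyStochastic hM, one_mul]
  rw [Finset.sum_comm]
  simp only [← Finset.sum_mul, sum_col_of_mem_doublyStochastic hM, one_mul]

theorem trace_mul_eq_sum_normSq (V W : Matrix n n ℂ) (p l : n → ℝ) :
    (V * diagonal (fun i ↦ (p i : ℂ)) * Vᴴ * (W * diagonal (fun j ↦ (l j : ℂ)) * Wᴴ)).trace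
      = ((∑ j, ∑ i, Complex.normSq ((Wᴴ * V) j i) * p i * l j : ℝ) : ℂ) := by
  set C := Wᴴ * V
  have hcyc :
      (V * diagonal (fun i ↦ (p i : ℂ)) * Vᴴ * (W * diagonal (fun j ↦ (l j : ℂ)) * Wᴴ)).trace
      = (C * diagonal (fun i ↦ (p i : ℂ)) * Cᴴ * diagonal (fun j ↦ (l j : ℂ))).trace := by
    rw [show Cᴴ = Vᴴ * W by simp [C]]
    simp only [C, mul_assoc]
    rw [trace_mul_comm Wᴴ]
    simp only [mul_assoc]
  rw [hcyc, trace]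
  simp only [diag_apply, mul_diagonal]
  simp only [mul_apply, conjTranspose_apply, diagonal_apply, mul_ite, mul_zero,
    Finset.sum_ite_eq', Finset.mem_univ, if_true]
  push_cast
  refine Finset.sum_congr rfl fun j _ ↦ ?_
  rw [Finset.sum_mul]
  refine Finset.sum_congr rfl fun i _ ↦ ?_
  rw [Complex.normSq_eq_conj_mul_self, Complex.star_def]
  ring

/-- `(Wᴴ * V) j i` is the overlap `⟪w j, v i⟫` of the eigenvectors of `B` and `A`. -/
theorem IsHermitian.overlap_mul_eigenvalues_eq_zero {A B : Matrix n n ℂ} (hA : A.IsHermitian)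
    (hB : B.IsHermitian) (hker : ∀ x, B *ᵥ x = 0 → A *ᵥ x = 0) {j : n}
    (hj : hB.eigenvalues j = 0) (i : n) :
    ((hB.eigenvectorUnitary : Matrix n n ℂ)ᴴ * hA.eigenvectorUnitary) j i * hA.eigenvalues i
      = 0 := by
  set V : Matrix n n ℂ := (hA.eigenvectorUnitary : Matrix n n ℂ)
  set W : Matrix n n ℂ := (hB.eigenvectorUnitary : Matrix n n ℂ)
  have hAW : A *ᵥ (W *ᵥ Pi.single j 1) = 0 := hker _ <| by
    rw [mulVec_mulVec, hB.mul_eigenvectorUnitary, ← mulVec_mulVec, diagonal_mulVec_single, hj,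
      Complex.ofReal_zero, zero_mul, Pi.single_zero, mulVec_zero]
  have hrow (k : n) : (Wᴴ * A) j k = 0 := by
    have := congrFun hAW k
    rw [mulVec_mulVec, mulVec_single_one, col_apply, Pi.zero_apply] at this
    rw [← hA.eq, ← conjTranspose_mul, conjTranspose_apply, this, star_zero]
  calc (Wᴴ * V) j i * hA.eigenvalues i = (Wᴴ * A * V) j i := by
        rw [mul_assoc Wᴴ A, hA.mul_eigenvectorUnitary, ← mul_assoc, mul_diagonal]
    _ = 0 := by simp [mul_apply, hrow]

/-- In the eigenbases, the weights `‖⟪w j, v i⟫‖²` form a doubly stochastic matrix, and the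
inequality is their average of the scalar inequalities `p log q ≤ p log p - p + q`; the kernel
condition rules out `q = 0 < p` at nonzero weight. -/
theorem klein_inequality {A B : Matrix n n ℂ} (hA : A.PosSemidef) (hB : B.PosSemidef)
    (hker : ∀ x, B *ᵥ x = 0 → A *ᵥ x = 0) :
    (A * mlog B).trace.re ≤ (A * mlog A).trace.re - A.trace.re + B.trace.re := by
  set V : Matrix n n ℂ := (hA.1.eigenvectorUnitary : Matrix n n ℂ)
  set W : Matrix n n ℂ := (hB.1.eigenvectorUnitary : Matrix n n ℂ)
  set p := hA.1.eigenvalues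
  set q := hB.1.eigenvalues
  set a := (Wᴴ * V).map Complex.normSq
  have ha : a ∈ doublyStochastic ℝ n := map_normSq_mem_doublyStochastic <| by
    rw [← star_eq_conjTranspose]
    exact mul_mem (Unitary.star_mem hB.1.eigenvectorUnitary.2) hA.1.eigenvectorUnitary.2
  have hAB : (A * mlog B).trace.re = ∑ j, ∑ i, a j i * p i * Real.log (q j) := by
    rw [mlog_eq_cfc, cfc_eq_of_eq_mul_diagonal_mul hB.1.eigenvectorUnitary.2
      hB.1.eq_mul_diagonal_mul, hA.1.eq_mul_diagonal_mul, trace_mul_eq_sum_normSq,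
      Complex.ofReal_re]
    rfl
  have hAA : (A * mlog A).trace.re = ∑ i, (p i * Real.log (p i) - p i) + ∑ i, p i := by
    have := vnEntropy_eq_of_eq_mul_diagonal_mul hA.1.eigenvectorUnitary.2 hA.1.eq_mul_diagonal_mul
    rw [vnEntropy, neg_eq_iff_eq_neg] at this
    simp only [this, Real.negMulLog, neg_mul, Finset.sum_neg_distrib, neg_neg,
      Finset.sum_sub_distrib, sub_add_cancel]
    rfl
  have hterm (j i : n) :
      a j i * p i * Real.log (q j) ≤ a j i * ((p i * Real.log (p i) - p i) + q j) := by
    rw [mul_assoc]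
    by_cases hji : (Wᴴ * V) j i = 0
    · simp [a, hji]
    refine mul_le_mul_of_nonneg_left (Real.mul_log_le_mul_log_sub_add (hA.eigenvalues_nonneg i)
      (hB.eigenvalues_nonneg j) fun hqj ↦ ?_) (Complex.normSq_nonneg _)
    have := hA.1.overlap_mul_eigenvalues_eq_zero hB.1 hker hqj i
    exact_mod_cast (mul_eq_zero.mp this).resolve_left hji
  calc (A * mlog B).trace.re = ∑ j, ∑ i, a j i * p i * Real.log (q j) := hAB
    _ ≤ ∑ j, ∑ i, a j i * ((p i * Real.log (p i) - p i) + q j) :=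
        Finset.sum_le_sum fun j _ ↦ Finset.sum_le_sum fun i _ ↦ hterm j i
    _ = (A * mlog A).trace.re - A.trace.re + B.trace.re := by
        rw [sum_sum_mul_add_of_mem_doublyStochastic ha, hAA, hA.1.re_trace_eq_sum_eigenvalues,
          hB.1.re_trace_eq_sum_eigenvalues]
        ring

end Spectral

section Pinching

variable {n ι : Type*} [Fintype n] [Fintype ι] {Q : ι → Matrix n n ℂ}

theorem PosSemidef.sum_mul_mul {τ : Matrix n n ℂ} (hτ : τ.PosSemidef)
    (hQh : ∀ i, (Q i).IsHermitian) : (∑ i, Q i * τ * Q i).PosSemidef :=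
  posSemidef_sum _ fun i _ ↦ by simpa only [(hQh i).eq] using hτ.conjTranspose_mul_mul_same (Q i)

variable [DecidableEq n]

theorem commute_sum_mul_mul (hQ : OrthogonalIdempotents Q) (τ : Matrix n n ℂ) (j : ι) :
    Commute (Q j) (∑ i, Q i * τ * Q i) := by
  classical
  have hL : Q j * ∑ i, Q i * τ * Q i = Q j * τ * Q j := by
    simp only [Finset.mul_sum, ← mul_assoc, hQ.mul_eq, ite_mul, zero_mul, Finset.sum_ite_eq,
      Finset.mem_univ, if_true]
  have hR : (∑ i, Q i * τ * Q i) * Q j = Q j * τ * Q j := by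
    simp only [Finset.sum_mul, mul_assoc, hQ.mul_eq, mul_ite, mul_zero, Finset.sum_ite_eq',
      Finset.mem_univ, if_true]
  rw [Commute, SemiconjBy, hL, hR]

theorem trace_sum_mul_mul_mul (hQ : CompleteOrthogonalIdempotents Q) (τ : Matrix n n ℂ)
    {L : Matrix n n ℂ} (hL : ∀ i, Commute (Q i) L) :
    ((∑ i, Q i * τ * Q i) * L).trace = (τ * L).trace := by
  have hterm (i : ι) : (Q i * τ * Q i * L).trace = (Q i * (τ * L)).trace := by
    rw [mul_assoc _ (Q i), (hL i).eq, ← mul_assoc, trace_mul_comm, ← mul_assoc, ← mul_assoc,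
      (hQ.idem i).eq, mul_assoc]
  rw [Finset.sum_mul, trace_sum, Finset.sum_congr rfl fun i _ ↦ hterm i, ← trace_sum,
    ← Finset.sum_mul, hQ.complete, one_mul]

theorem PosSemidef.mulVec_eq_zero_of_sum_mul_mul {τ : Matrix n n ℂ} (hτ : τ.PosSemidef)
    (hQ : CompleteOrthogonalIdempotents Q) (hQh : ∀ i, (Q i).IsHermitian) {x : n → ℂ}
    (hx : (∑ i, Q i * τ * Q i) *ᵥ x = 0) : τ *ᵥ x = 0 := by
  have hsum : ∑ i, star (Q i *ᵥ x) ⬝ᵥ τ *ᵥ (Q i *ᵥ x) = 0 := by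
    rw [← dotProduct_zero (star x), ← hx, sum_mulVec, dotProduct_sum]
    refine Finset.sum_congr rfl fun i _ ↦ ?_
    rw [star_mulVec, (hQh i).eq, ← dotProduct_mulVec, mulVec_mulVec, mulVec_mulVec]
  have hzero (i : ι) : τ *ᵥ (Q i *ᵥ x) = 0 :=
    (hτ.dotProduct_mulVec_zero_iff _).mp <| (Finset.sum_eq_zero_iff_of_nonneg
      fun i _ ↦ hτ.dotProduct_mulVec_nonneg _).mp hsum i (Finset.mem_univ i)
  rw [← one_mulVec x, ← hQ.complete, sum_mulVec, mulVec_sum]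
  exact Finset.sum_eq_zero fun i _ ↦ hzero i

theorem vnEntropy_le_vnEntropy_sum_mul_mul {τ : Matrix n n ℂ} (hτ : τ.PosSemidef)
    (hQ : CompleteOrthogonalIdempotents Q) (hQh : ∀ i, (Q i).IsHermitian) :
    vnEntropy τ ≤ vnEntropy (∑ i, Q i * τ * Q i) := by
  set τ' := ∑ i, Q i * τ * Q i
  have hlog (i : ι) : Commute (Q i) (mlog τ') := by
    rw [mlog_eq_cfc]
    exact ((commute_sum_mul_mul hQ.toOrthogonalIdempotents τ i).symm.cfc_real _).symm
  have hklein := klein_inequality hτ (hτ.sum_mul_mul hQh)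
    fun x ↦ hτ.mulVec_eq_zero_of_sum_mul_mul hQ hQh
  have htrace : τ'.trace = τ.trace := by
    simpa only [mul_one] using trace_sum_mul_mul_mul hQ τ fun i ↦ Commute.one_right (Q i)
  rw [htrace] at hklein
  rw [vnEntropy, vnEntropy, trace_sum_mul_mul_mul hQ τ hlog]
  linarith

end Pinching

section Dilation

theorem IsHermitian.kronecker {m n R : Type*} [CommRing R] [StarRing R] {A : Matrix m m R}
    {B : Matrix n n R} (hA : A.IsHermitian) (hB : B.IsHermitian) : (A ⊗ₖ B).IsHermitian := by
  rw [IsHermitian, conjTranspose_kronecker, hA.eq, hB.eq]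

variable {n ι : Type*} [Fintype n] [Fintype ι]

theorem star_dotProduct_self_eq_one {φ : n → ℂ} (hφ : ∑ i, ‖φ i‖ ^ 2 = 1) :
    star φ ⬝ᵥ φ = 1 := by
  simp only [dotProduct, Pi.star_apply, Complex.star_def, Complex.conj_mul']
  exact_mod_cast hφ

theorem isIdempotentElem_vecMulVec_star {φ : n → ℂ} (hφ : star φ ⬝ᵥ φ = 1) :
    IsIdempotentElem (vecMulVec φ (star φ)) := by
  rw [IsIdempotentElem, vecMulVec_mul_vecMulVec, hφ, one_smul]

theorem trace_vecMulVec_star {φ : n → ℂ} (hφ : star φ ⬝ᵥ φ = 1) :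
    (vecMulVec φ (star φ)).trace = 1 := by
  rw [trace_vecMulVec, dotProduct_comm, hφ]

theorem _root_.CompleteOrthogonalIdempotents.conj_one_kronecker [DecidableEq n] {m : Type*}
    [Fintype m] [DecidableEq m] {P : ι → Matrix n n ℂ} (hP : CompleteOrthogonalIdempotents P)
    {U : Matrix (m × n) (m × n) ℂ} (hU : U ∈ unitaryGroup (m × n) ℂ) :
    CompleteOrthogonalIdempotents fun i ↦ Uᴴ * ((1 : Matrix m m ℂ) ⊗ₖ P i) * U := by
  let f : Matrix n n ℂ →+* Matrix (m × n) (m × n) ℂ :=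
    ((Unitary.conjStarAlgAut ℂ _ (star ⟨U, hU⟩) : Matrix (m × n) (m × n) ℂ →+* _).comp
      (kroneckerAlgEquiv m n ℂ : _ →+* _)).comp
      (Algebra.TensorProduct.includeRight :
        Matrix n n ℂ →ₐ[ℂ] TensorProduct ℂ (Matrix m m ℂ) (Matrix n n ℂ)).toRingHom
  convert hP.map f using 1
  ext i : 1
  simp [f, star_eq_conjTranspose]

end Dilation

end Matrix

theorem dilation_entropy_increase_general {m k : ℕ} {N : Type*} [Fintype N]
    (ρ : Matrix (Fin m) (Fin m) ℂ) (hρ : ρ.PosSemidef)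
    (φ : Fin k → ℂ) (hφ : ∑ i, ‖φ i‖ ^ 2 = 1)
    (U : Matrix (Fin m × Fin k) (Fin m × Fin k) ℂ)
    (hU : U ∈ Matrix.unitaryGroup (Fin m × Fin k) ℂ)
    (P : N → Matrix (Fin k) (Fin k) ℂ)
    (hPh : ∀ n, (P n).IsHermitian) (hPp : ∀ n, P n * P n = P n)
    (hPo : ∀ n n', n ≠ n' → P n * P n' = 0) (hPsum : ∑ n, P n = 1) :
    vnEntropy ρ ≤
      vnEntropy (∑ n, (Uᴴ * ((1 : Matrix (Fin m) (Fin m) ℂ) ⊗ₖ P n) * U) *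
        (ρ ⊗ₖ Matrix.vecMulVec φ (star φ)) *
        (Uᴴ * ((1 : Matrix (Fin m) (Fin m) ℂ) ⊗ₖ P n) * U)) := by
  have hφ1 := star_dotProduct_self_eq_one hφ
  have hP : CompleteOrthogonalIdempotents P := ⟨⟨hPp, fun n n' h ↦ hPo n n' h⟩, hPsum⟩
  have hPφ : (vecMulVec φ (star φ)).PosSemidef := posSemidef_vecMulVec_self_star φ
  calc vnEntropy ρ = vnEntropy (ρ ⊗ₖ vecMulVec φ (star φ)) := by
        rw [vnEntropy_kronecker hρ.1 hPφ.1,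
          vnEntropy_eq_zero_of_isIdempotentElem (isIdempotentElem_vecMulVec_star hφ1),
          trace_vecMulVec_star hφ1]
        simp
    _ ≤ _ := vnEntropy_le_vnEntropy_sum_mul_mul (hρ.kronecker hPφ) (hP.conj_one_kronecker hU)
        fun n ↦ isHermitian_conjTranspose_mul_mul U (isHermitian_one.kronecker (hPh n))

/-- For a pure product initial state `ρ ⊗ P_φ` and a Lüders measurement with
projections `Q_n = U* (1 ⊗ P_n) U` on the composite system, the entropy of the
post-measurement state `ρ' = Σ_n Q_n (ρ ⊗ P_φ) Q_n` satisfies `S(ρ) ≤ S(ρ')`. -/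
theorem dilation_entropy_increase {m k : ℕ} {N : Type*} [Fintype N]
    (ρ : Matrix (Fin m) (Fin m) ℂ) (hρ : ρ.PosSemidef) (hρ1 : ρ.trace = 1)
    (φ : Fin k → ℂ) (hφ : ∑ i, ‖φ i‖ ^ 2 = 1)
    (U : Matrix (Fin m × Fin k) (Fin m × Fin k) ℂ)
    (hU : U ∈ Matrix.unitaryGroup (Fin m × Fin k) ℂ)
    (P : N → Matrix (Fin k) (Fin k) ℂ)
    (hPh : ∀ n, (P n).IsHermitian) (hPp : ∀ n, P n * P n = P n)
    (hPo : ∀ n n', n ≠ n' → P n * P n' = 0) (hPsum : ∑ n, P n = 1) :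
    vnEntropy ρ ≤
      vnEntropy (∑ n, (Uᴴ * ((1 : Matrix (Fin m) (Fin m) ℂ) ⊗ₖ P n) * U) *
        (ρ ⊗ₖ Matrix.vecMulVec φ (star φ)) *
        (Uᴴ * ((1 : Matrix (Fin m) (Fin m) ℂ) ⊗ₖ P n) * U)) :=
  dilation_entropy_increase_general ρ hρ φ hφ U hU P hPh hPp hPo hPsum
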